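/- arXiv:2501.06691 — 5 statements merged into one kernel-verified Lean document; each statement's English description precedes it below -/
import Mathlib

section
/- Let M be the block matrix ((id_n, 0), (A, −b)) of size (n+r) × (n+1), where A ∈ ℤ^{r×n} and b ∈ ℤ^r, and suppose the top-left k × k block A_1 of A is nonsingular. Then performing successive column eliminations with pivots at positions (n+1,1), (n+2,2), …, (n+k,k) (in any order of the pivot pairs) yields, after removing the ignored rows n+1,…,n+k and columns 1,…,k, the matrix with blocks: top block (−A_1^{-1}A_2, A_1^{-1}b_1), middle block (id_{n−k}, 0), bottom block (A_4 − A_3 A_1^{-1} A_2, A_3 A_1^{-1} b_1 − b_2). In particular the result is independent of the order in which the pivots are processed. -/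
open Matrix

/-- Row index type of `M`: rows `1..n` split as `Fin k ⊕ Fin m` (with `m = n - k`),
and rows `n+1..n+r` split as `Fin k ⊕ Fin s` (with `s = r - k`). -/
abbrev RowIdx (k m s : ℕ) := (Fin k ⊕ Fin m) ⊕ (Fin k ⊕ Fin s)

/-- Column index type of `M`: columns `1..n` split as `Fin k ⊕ Fin m`, plus the last column. -/
abbrev ColIdx (k m : ℕ) := (Fin k ⊕ Fin m) ⊕ Unit

/-- Gaussian column elimination with the `(i,j)` entry as pivot: add
`-(M i s / M i j)` times column `j` to each column `s ≠ j`. -/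
def colElim {R C : Type*} [DecidableEq C] (M : Matrix R C ℚ) (i : R) (j : C) :
    Matrix R C ℚ :=
  fun a s => if s = j then M a s else M a s - M i s / M i j * M a j

/-- Perform the pivot eliminations at positions `(n+i, i)` for `i` in the list `L`. -/
def elimAll {k m s : ℕ} (M : Matrix (RowIdx k m s) (ColIdx k m) ℚ) (L : List (Fin k)) :
    Matrix (RowIdx k m s) (ColIdx k m) ℚ :=
  L.foldl (fun N i => colElim N (Sum.inr (Sum.inl i)) (Sum.inl (Sum.inl i))) M

/-- The matrix `M = ((id_n, 0), (A, -b))` in block form, where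
`A = ((A₁,A₂),(A₃,A₄))` and `b = (b₁,b₂)`. -/
def bigM {k m s : ℕ} (A₁ : Matrix (Fin k) (Fin k) ℚ) (A₂ : Matrix (Fin k) (Fin m) ℚ)
    (A₃ : Matrix (Fin s) (Fin k) ℚ) (A₄ : Matrix (Fin s) (Fin m) ℚ)
    (b₁ : Fin k → ℚ) (b₂ : Fin s → ℚ) : Matrix (RowIdx k m s) (ColIdx k m) ℚ :=
  fun p q =>
    match p, q with
    | Sum.inl p', Sum.inl q' => if p' = q' then 1 else 0
    | Sum.inl _, Sum.inr _ => 0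
    | Sum.inr (Sum.inl i), Sum.inl (Sum.inl j) => A₁ i j
    | Sum.inr (Sum.inl i), Sum.inl (Sum.inr j) => A₂ i j
    | Sum.inr (Sum.inl i), Sum.inr _ => -b₁ i
    | Sum.inr (Sum.inr i), Sum.inl (Sum.inl j) => A₃ i j
    | Sum.inr (Sum.inr i), Sum.inl (Sum.inr j) => A₄ i j
    | Sum.inr (Sum.inr i), Sum.inr _ => -b₂ i

/-! Each column elimination is right multiplication by a matrix that differs from the identity
only in the row of the pivot column, so the result is `M * E` where `E` agrees with the identity
outside the rows of the pivot columns. When the pivot `(n+i, i)` is processed, row `n+i` is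
cleared outside column `i`, and later pivots leave it untouched because it already vanishes in
their columns. Reading `M * E` blockwise, the retained top rows of the result are the rows of `E`,
and the vanishing of the pivot rows says `A₁ F + A₂ = 0` and `A₁ g = b₁` for the pivot rows
`(F, g)` of `E`; the bottom rows are then `A₃ F + A₄` and `A₃ g - b₂`. -/

open Sum

section ColElim

variable {R C : Type*} [DecidableEq C]

lemma colElim_eq_mul [Fintype C] (M : Matrix R C ℚ) (i : R) (j : C) :
    colElim M i j = M * (1 + updateRow 0 j fun t => if t = j then 0 else -(M i t / M i j)) := by
  ext a t
  rw [Matrix.mul_add, Matrix.mul_one, Matrix.add_apply, Matrix.mul_apply]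
  by_cases ht : t = j <;> simp [colElim, updateRow_apply, ht, sub_eq_add_neg, mul_comm]

lemma colElim_row_of_apply_eq_zero (M : Matrix R C ℚ) (i : R) (j : C) {a : R} (ha : M a j = 0) :
    colElim M i j a = M a := by
  ext q
  by_cases hq : q = j <;> simp [colElim, hq, ha]

lemma colElim_pivotRow_apply (M : Matrix R C ℚ) {i : R} {j : C} (h : M i j ≠ 0) {q : C}
    (hq : q ≠ j) : colElim M i j i q = 0 := by
  simp [colElim, hq, div_mul_cancel₀ _ h]

variable {ι : Type*} (ρ : ι → R) (κ : ι → C)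

def pivotElim (M : Matrix R C ℚ) (L : List ι) : Matrix R C ℚ :=
  L.foldl (fun N i => colElim N (ρ i) (κ i)) M

lemma pivotElim_cons (M : Matrix R C ℚ) (i : ι) (L : List ι) :
    pivotElim ρ κ M (i :: L) = pivotElim ρ κ (colElim M (ρ i) (κ i)) L :=
  rfl

lemma pivotElim_append (M : Matrix R C ℚ) (L₁ L₂ : List ι) :
    pivotElim ρ κ M (L₁ ++ L₂) = pivotElim ρ κ (pivotElim ρ κ M L₁) L₂ :=
  List.foldl_append

lemma exists_pivotElim_eq_mul [Fintype C] (M : Matrix R C ℚ) (L : List ι) :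
    ∃ E : Matrix C C ℚ, pivotElim ρ κ M L = M * E ∧
      ∀ p, (∀ i, κ i ≠ p) → E p = (1 : Matrix C C ℚ) p := by
  induction L generalizing M with
  | nil => exact ⟨1, (Matrix.mul_one M).symm, fun _ _ => rfl⟩
  | cons i L ih =>
    obtain ⟨E, hE, hrows⟩ := ih (colElim M (ρ i) (κ i))
    refine ⟨_ * E, by rw [pivotElim_cons, hE, colElim_eq_mul, Matrix.mul_assoc], fun p hp => ?_⟩
    rw [Matrix.add_mul, Matrix.one_mul, ← hrows p hp]
    ext q
    simp [Matrix.mul_apply, updateRow_ne (hp i).symm]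

lemma pivotElim_row_of_forall_apply_eq_zero (M : Matrix R C ℚ) (L : List ι) {a : R}
    (ha : ∀ i ∈ L, M a (κ i) = 0) : pivotElim ρ κ M L a = M a := by
  induction L generalizing M with
  | nil => rfl
  | cons i L ih =>
    have hrow := colElim_row_of_apply_eq_zero M (ρ i) (κ i) (ha i List.mem_cons_self)
    rw [pivotElim_cons, ih, hrow]
    intro i' hi'
    rw [hrow]
    exact ha i' (List.mem_cons_of_mem _ hi')

lemma pivotElim_pivotRow_apply (hκ : Function.Injective κ) (M : Matrix R C ℚ) {L : List ι}
    (hL : L.Nodup)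
    (hpiv : ∀ L₁ L₂ i, L = L₁ ++ i :: L₂ → pivotElim ρ κ M L₁ (ρ i) (κ i) ≠ 0)
    {i : ι} (hi : i ∈ L) {q : C} (hq : q ≠ κ i) : pivotElim ρ κ M L (ρ i) q = 0 := by
  obtain ⟨L₁, L₂, rfl⟩ := List.append_of_mem hi
  have hi₂ : i ∉ L₂ := (List.nodup_cons.mp (List.nodup_append.mp hL).2.1).1
  set N := colElim (pivotElim ρ κ M L₁) (ρ i) (κ i)
  have hN : ∀ q ≠ κ i, N (ρ i) q = 0 := fun q hq =>
    colElim_pivotRow_apply _ (hpiv L₁ L₂ i rfl) hq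
  rw [pivotElim_append, pivotElim_cons,
    pivotElim_row_of_forall_apply_eq_zero ρ κ N L₂ fun a ha => hN _ (hκ.ne fun h => hi₂ (h ▸ ha))]
  exact hN q hq

end ColElim

section BigM

variable {k m s : ℕ} (A₁ : Matrix (Fin k) (Fin k) ℚ) (A₂ : Matrix (Fin k) (Fin m) ℚ)
  (A₃ : Matrix (Fin s) (Fin k) ℚ) (A₄ : Matrix (Fin s) (Fin m) ℚ) (b₁ : Fin k → ℚ)
  (b₂ : Fin s → ℚ) {E : Matrix (ColIdx k m) (ColIdx k m) ℚ}

lemma elimAll_eq_pivotElim (M : Matrix (RowIdx k m s) (ColIdx k m) ℚ) (L : List (Fin k)) :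
    elimAll M L = pivotElim (fun i => inr (inl i)) (fun i => inl (inl i)) M L :=
  rfl

lemma bigM_mul_apply_inl (x : Fin k ⊕ Fin m) (q : ColIdx k m) :
    (bigM A₁ A₂ A₃ A₄ b₁ b₂ * E) (inl x) q = E (inl x) q := by
  simp [Matrix.mul_apply, bigM, Fintype.sum_sum_type]

lemma bigM_mul_apply_inr_inl_inr
    (hE : ∀ p, (∀ i, inl (inl i) ≠ p) → E p = (1 : Matrix (ColIdx k m) (ColIdx k m) ℚ) p)
    (x : Fin k ⊕ Fin s) (j : Fin m) :
    (bigM A₁ A₂ A₃ A₄ b₁ b₂ * E) (inr x) (inl (inr j)) =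
      (fromRows A₁ A₃ * E.submatrix (inl ∘ inl) (inl ∘ inr) + fromRows A₂ A₄) x j := by
  rcases x with i | i <;>
  simp [Matrix.mul_apply, bigM, Fintype.sum_sum_type, hE (inl (inr _)), hE (inr _), one_apply]

lemma bigM_mul_apply_inr_inr
    (hE : ∀ p, (∀ i, inl (inl i) ≠ p) → E p = (1 : Matrix (ColIdx k m) (ColIdx k m) ℚ) p)
    (x : Fin k ⊕ Fin s) :
    (bigM A₁ A₂ A₃ A₄ b₁ b₂ * E) (inr x) (inr ()) =
      (fromRows A₁ A₃ *ᵥ (fun i => E (inl (inl i)) (inr ())) - Sum.elim b₁ b₂) x := by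
  rcases x with i | i <;>
  simp [Matrix.mul_apply, mulVec, dotProduct, bigM, Fintype.sum_sum_type, hE (inl (inr _)),
    hE (inr _), one_apply, sub_eq_add_neg]

variable {A₁ A₂ A₃ A₄ b₁ b₂}

lemma pivotRows_eq_of_bigM_mul (hA₁ : IsUnit A₁.det)
    (hE : ∀ p, (∀ i, inl (inl i) ≠ p) → E p = (1 : Matrix (ColIdx k m) (ColIdx k m) ℚ) p)
    (hpiv : ∀ i q, q ≠ inl (inl i) → (bigM A₁ A₂ A₃ A₄ b₁ b₂ * E) (inr (inl i)) q = 0) :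
    E.submatrix (inl ∘ inl) (inl ∘ inr) = -(A₁⁻¹ * A₂) ∧
      (fun i => E (inl (inl i)) (inr ())) = A₁⁻¹ *ᵥ b₁ := by
  set F := E.submatrix (inl ∘ inl) (inl ∘ inr)
  set e := fun i => E (inl (inl i)) (inr ())
  have hF : A₁ * F = -A₂ := by
    ext i j
    have := (bigM_mul_apply_inr_inl_inr A₁ A₂ A₃ A₄ b₁ b₂ hE (inl i) j).symm.trans
      (hpiv i _ (by simp))
    simpa [eq_neg_iff_add_eq_zero] using this
  have he : A₁ *ᵥ e = b₁ := by
    ext i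
    have := (bigM_mul_apply_inr_inr A₁ A₂ A₃ A₄ b₁ b₂ hE (inl i)).symm.trans (hpiv i _ (by simp))
    simpa [sub_eq_zero] using this
  constructor
  · rw [← nonsing_inv_mul_cancel_left A₁ F hA₁, hF, Matrix.mul_neg]
  · rw [← he, mulVec_mulVec, nonsing_inv_mul A₁ hA₁, one_mulVec]

end BigM

theorem stmt3_general (k m s : ℕ)
    (A₁ : Matrix (Fin k) (Fin k) ℤ)
    (hA₁ : A₁.det ≠ 0)
    (A₁q : Matrix (Fin k) (Fin k) ℚ) (hA₁q : A₁q = A₁.map (Int.cast : ℤ → ℚ))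
    (A₂q : Matrix (Fin k) (Fin m) ℚ)
    (A₃q : Matrix (Fin s) (Fin k) ℚ)
    (A₄q : Matrix (Fin s) (Fin m) ℚ)
    (b₁q : Fin k → ℚ)
    (b₂q : Fin s → ℚ)
    (M : Matrix (RowIdx k m s) (ColIdx k m) ℚ)
    (hM : M = bigM A₁q A₂q A₃q A₄q b₁q b₂q)
    (L : List (Fin k)) (hL : L.Perm (List.finRange k))
    (hpiv : ∀ (L₁ L₂ : List (Fin k)) (i : Fin k), L = L₁ ++ i :: L₂ →
      elimAll M L₁ (Sum.inr (Sum.inl i)) (Sum.inl (Sum.inl i)) ≠ 0)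
    (N : Matrix (RowIdx k m s) (ColIdx k m) ℚ) (hN : N = elimAll M L) :
    (∀ (i : Fin k) (j : Fin m),
      N (Sum.inl (Sum.inl i)) (Sum.inl (Sum.inr j)) = (-(A₁q⁻¹ * A₂q)) i j) ∧
    (∀ i : Fin k, N (Sum.inl (Sum.inl i)) (Sum.inr ()) = (A₁q⁻¹ *ᵥ b₁q) i) ∧
    (∀ (i j : Fin m),
      N (Sum.inl (Sum.inr i)) (Sum.inl (Sum.inr j)) = if i = j then 1 else 0) ∧
    (∀ i : Fin m, N (Sum.inl (Sum.inr i)) (Sum.inr ()) = 0) ∧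
    (∀ (i : Fin s) (j : Fin m),
      N (Sum.inr (Sum.inr i)) (Sum.inl (Sum.inr j)) = (A₄q - A₃q * A₁q⁻¹ * A₂q) i j) ∧
    (∀ i : Fin s,
      N (Sum.inr (Sum.inr i)) (Sum.inr ()) = (A₃q *ᵥ (A₁q⁻¹ *ᵥ b₁q) - b₂q) i) := by
  have hdet : IsUnit A₁q.det := by
    rw [hA₁q, ← Int.cast_det, isUnit_iff_ne_zero]
    exact_mod_cast hA₁
  simp only [elimAll_eq_pivotElim] at hN hpiv
  subst hM hN
  obtain ⟨E, hME, hE⟩ := exists_pivotElim_eq_mul _ _ (bigM A₁q A₂q A₃q A₄q b₁q b₂q) L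
  have hpivRows : ∀ i q, q ≠ inl (inl i) →
      (bigM A₁q A₂q A₃q A₄q b₁q b₂q * E) (inr (inl i)) q = 0 := fun i q hq =>
    hME ▸ pivotElim_pivotRow_apply _ _ (fun _ _ h => by simpa using h) _
      (hL.nodup_iff.mpr (List.nodup_finRange k)) hpiv (hL.mem_iff.mpr (List.mem_finRange i)) hq
  obtain ⟨hF, he⟩ := pivotRows_eq_of_bigM_mul hdet hE hpivRows
  rw [hME]
  refine ⟨fun i j => ?_, fun i => ?_, fun i j => ?_, fun i => ?_, fun i j => ?_, fun i => ?_⟩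
  · rw [bigM_mul_apply_inl, ← hF]
    rfl
  · rw [bigM_mul_apply_inl, ← he]
  · simp [bigM_mul_apply_inl, hE (inl (inr i)), one_apply]
  · simp [bigM_mul_apply_inl, hE (inl (inr i)), one_apply]
  · rw [bigM_mul_apply_inr_inl_inr _ _ _ _ _ _ hE, hF]
    simp [Matrix.mul_neg, Matrix.mul_assoc, sub_eq_neg_add]
  · rw [bigM_mul_apply_inr_inr _ _ _ _ _ _ hE, he]
    simp [mulVec_mulVec]

/-- Performing the `k` pivot eliminations at positions `(n+1,1), …, (n+k,k)` of
`M = ((id_n, 0),(A,-b))` in any order (with all pivots nonzero) yields, on the retained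
rows and columns, the block matrix with blocks `(-A₁⁻¹A₂, A₁⁻¹b₁)`, `(id, 0)` and
`(A₄ - A₃A₁⁻¹A₂, A₃A₁⁻¹b₁ - b₂)`; in particular the result is independent of the
order of the pivots. -/
theorem stmt3 (k m s : ℕ)
    (A₁ : Matrix (Fin k) (Fin k) ℤ) (A₂ : Matrix (Fin k) (Fin m) ℤ)
    (A₃ : Matrix (Fin s) (Fin k) ℤ) (A₄ : Matrix (Fin s) (Fin m) ℤ)
    (b₁ : Fin k → ℤ) (b₂ : Fin s → ℤ)
    (hA₁ : A₁.det ≠ 0)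
    (A₁q : Matrix (Fin k) (Fin k) ℚ) (hA₁q : A₁q = A₁.map (Int.cast : ℤ → ℚ))
    (A₂q : Matrix (Fin k) (Fin m) ℚ) (hA₂q : A₂q = A₂.map (Int.cast : ℤ → ℚ))
    (A₃q : Matrix (Fin s) (Fin k) ℚ) (hA₃q : A₃q = A₃.map (Int.cast : ℤ → ℚ))
    (A₄q : Matrix (Fin s) (Fin m) ℚ) (hA₄q : A₄q = A₄.map (Int.cast : ℤ → ℚ))
    (b₁q : Fin k → ℚ) (hb₁q : b₁q = fun i => (b₁ i : ℚ))
    (b₂q : Fin s → ℚ) (hb₂q : b₂q = fun i => (b₂ i : ℚ))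
    (M : Matrix (RowIdx k m s) (ColIdx k m) ℚ)
    (hM : M = bigM A₁q A₂q A₃q A₄q b₁q b₂q)
    (L : List (Fin k)) (hL : L.Perm (List.finRange k))
    (hpiv : ∀ (L₁ L₂ : List (Fin k)) (i : Fin k), L = L₁ ++ i :: L₂ →
      elimAll M L₁ (Sum.inr (Sum.inl i)) (Sum.inl (Sum.inl i)) ≠ 0)
    (N : Matrix (RowIdx k m s) (ColIdx k m) ℚ) (hN : N = elimAll M L) :
    (∀ (i : Fin k) (j : Fin m),
      N (Sum.inl (Sum.inl i)) (Sum.inl (Sum.inr j)) = (-(A₁q⁻¹ * A₂q)) i j) ∧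
    (∀ i : Fin k, N (Sum.inl (Sum.inl i)) (Sum.inr ()) = (A₁q⁻¹ *ᵥ b₁q) i) ∧
    (∀ (i j : Fin m),
      N (Sum.inl (Sum.inr i)) (Sum.inl (Sum.inr j)) = if i = j then 1 else 0) ∧
    (∀ i : Fin m, N (Sum.inl (Sum.inr i)) (Sum.inr ()) = 0) ∧
    (∀ (i : Fin s) (j : Fin m),
      N (Sum.inr (Sum.inr i)) (Sum.inl (Sum.inr j)) = (A₄q - A₃q * A₁q⁻¹ * A₂q) i j) ∧
    (∀ i : Fin s,
      N (Sum.inr (Sum.inr i)) (Sum.inr ()) = (A₃q *ᵥ (A₁q⁻¹ *ᵥ b₁q) - b₂q) i) :=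
  stmt3_general k m s A₁ hA₁ A₁q hA₁q A₂q A₃q A₄q b₁q b₂q M hM L hL hpiv N hN
end

section
/- Let W = (w_1, …, w_m, v) ∈ ℚ^{n×(m+1)} be a matrix such that the submatrix of (w_1,…,w_m) on some m rows equals id_m and the corresponding rows of v are 0. Then the set of integer points of the shifted cone v + K(w_1,…,w_m) (nonnegative real combinations) equals the set {v + Σ k_j w_j : k_j ∈ ℕ} ∩ ℤ^n; that is, every lattice point of the shifted cone has nonnegative integer coefficients k_j. -/
/-- If the generator matrix `(w_1,…,w_m)` contains an identity submatrix `id_m` on some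
`m` rows where the shift vector `v` vanishes, then the lattice points of the shifted cone
`v + K(w_1,…,w_m)` are exactly the integer points of the form `v + Σ k_j w_j` with
`k_j ∈ ℕ`. -/
theorem stmt5 (n m : ℕ) (w : Fin m → Fin n → ℚ) (v : Fin n → ℚ)
    (e : Fin m ↪ Fin n)
    (hid : ∀ i j : Fin m, w j (e i) = if i = j then 1 else 0)
    (hv : ∀ i : Fin m, v (e i) = 0) :
    {x : Fin n → ℤ | ∃ c : Fin m → ℝ, (∀ j, 0 ≤ c j) ∧
        ∀ p, (x p : ℝ) = (v p : ℝ) + ∑ j, c j * (w j p : ℝ)} =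
    {x : Fin n → ℤ | ∃ k : Fin m → ℕ, ∀ p, (x p : ℝ) = (v p : ℝ) + ∑ j, (k j : ℝ) * (w j p : ℝ)} := by
  ext x
  simp only [Set.mem_setOf_eq]
  constructor
  · rintro ⟨c, hc, hx⟩
    have hceq : ∀ i : Fin m, c i = (x (e i) : ℝ) := by
      intro i
      have := hx (e i)
      rw [hv i] at this
      simp only [hid, apply_ite (fun q : ℚ => (q : ℝ)), Rat.cast_one, Rat.cast_zero,
        mul_ite, mul_one, mul_zero, Finset.sum_ite_eq, Finset.mem_univ, if_true,
        Rat.cast_zero, zero_add] at this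
      exact this.symm
    refine ⟨fun i => (x (e i)).toNat, fun p => ?_⟩
    have hk : ∀ i : Fin m, ((x (e i)).toNat : ℝ) = c i := by
      intro i
      have h0 : (0 : ℝ) ≤ (x (e i) : ℝ) := (hceq i) ▸ hc i
      have h0' : (0 : ℤ) ≤ x (e i) := by exact_mod_cast h0
      rw [hceq i]
      exact_mod_cast congrArg (Int.cast : ℤ → ℝ) (Int.toNat_of_nonneg h0')
    rw [hx p]
    congr 1
    exact Finset.sum_congr rfl fun j _ => by rw [hk j]
  · rintro ⟨k, hx⟩
    exact ⟨fun j => (k j : ℝ), fun j => Nat.cast_nonneg _, hx⟩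
end

section
/- Let A be an r × n integer matrix all of whose r × r minors lie in {0, 1, −1} (A is unimodular) and suppose A has rank r. Then for every b ∈ ℤ^r, every vertex of the polyhedron P(A,b) = {α ∈ ℝ^n_{≥0} : Aα = b} has integer coordinates. -/
/-!
At a vertex `x` the columns of `A` indexed by the support of `x` are linearly independent:
a kernel vector `c` supported there would make `x ± εc` two points of the polyhedron with
midpoint `x`. Since `A` has full row rank, these columns extend to `r` linearly independent
columns, i.e. an invertible `r × r` submatrix `B`, whose determinant is then `±1`. The
coordinates of `x` on those columns solve `B z = b`, so `z = B⁻¹ b` is integral, and all other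
coordinates of `x` vanish.
-/

open Matrix Set Function Module

namespace Matrix

variable {m n R : Type*}

theorem linearIndepOn_col_iff [CommRing R] [Fintype n] (M : Matrix m n R) (s : Set n) :
    LinearIndepOn R M.col s ↔ ∀ c : n → R, support c ⊆ s → M *ᵥ c = 0 → c = 0 := by
  have hcomb : ∀ l : n →₀ R, Finsupp.linearCombination R M.col l = M *ᵥ l := fun l => by
    ext i
    simp [Finsupp.linearCombination_apply, Finsupp.sum_fintype, mulVec, dotProduct, mul_comm]
  rw [linearIndepOn_iff, ← Finsupp.equivFunOnFinite.symm.forall_congr_right]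
  simp [Finsupp.mem_supported, hcomb, ← DFunLike.coe_fn_eq]

theorem submatrix_mulVec_comp_of_support_subset [NonUnitalNonAssocSemiring R] [Fintype m]
    [Fintype n] (M : Matrix m n R) {f : m → n} (hf : Injective f) {x : n → R}
    (hx : support x ⊆ range f) : M.submatrix id f *ᵥ (x ∘ f) = M *ᵥ x := by
  ext i
  refine Finset.sum_of_injOn f hf.injOn (fun _ _ => Finset.mem_coe.mpr (Finset.mem_univ _))
    (fun k _ hk => ?_) (fun _ _ => rfl)
  have hxk : x k = 0 := notMem_support.mp fun h => hk (by simpa using hx h)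
  simp [hxk]

theorem span_col_eq_top_of_rank_eq [Field R] [Fintype m] [Fintype n] {M : Matrix m n R}
    (hM : M.rank = Fintype.card m) : Submodule.span R (range M.col) = ⊤ := by
  apply Submodule.eq_top_of_finrank_eq
  rw [← rank_eq_finrank_span_cols, hM, finrank_fintype_fun_eq_card]

theorem exists_isUnit_submatrix_of_linearIndepOn [Field R] [Fintype m] [DecidableEq m]
    [Fintype n] {M : Matrix m n R} (hM : M.rank = Fintype.card m) {s : Set n}
    (hs : LinearIndepOn R M.col s) :
    ∃ f : m → n, Injective f ∧ s ⊆ range f ∧ IsUnit (M.submatrix id f) := by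
  classical
  obtain ⟨t, -, hst, hspan, ht⟩ := exists_linearIndepOn_extension hs (subset_univ s)
  have htop : Submodule.span R (M.col '' t) = ⊤ := by
    rw [← top_le_iff, ← span_col_eq_top_of_rank_eq hM, ← image_univ]
    exact Submodule.span_le.mpr hspan
  have hcard : Fintype.card t = Fintype.card m := by
    rw [linearIndependent_iff_card_eq_finrank_span.mp ht, ← image_eq_range, Set.finrank, htop,
      finrank_top, finrank_fintype_fun_eq_card]
  let e : m ≃ t := Fintype.equivOfCardEq hcard.symm
  refine ⟨(↑) ∘ e, Subtype.val_injective.comp e.injective, ?_, ?_⟩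
  · rwa [range_comp, e.range_eq_univ, image_univ, Subtype.range_coe]
  · rw [← linearIndependent_cols_iff_isUnit]
    exact ht.comp e e.injective

theorem rank_map_algebraMap_eq_card_iff (S : Type*) [CommRing R] [Field S] [Algebra R S]
    [FaithfulSMul R S] [Fintype m] [Fintype n] (M : Matrix m n R) :
    (M.map (algebraMap R S)).rank = Fintype.card m ↔ LinearIndependent R M.row := by
  rw [← linearIndependent_algebraMap_comp_iff (S := S), rank_eq_finrank_span_row,
    linearIndependent_iff_card_eq_finrank_span, eq_comm]
  rfl

theorem exists_eq_intCast_of_mulVec_eq [CommRing R] [Fintype m] [DecidableEq m]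
    {B : Matrix m m ℤ} (hB : IsUnit B.det) {y : m → R} {b : m → ℤ}
    (hy : B.map (Int.cast : ℤ → R) *ᵥ y = fun i => (b i : R)) :
    ∃ z : m → ℤ, y = fun i => (z i : R) := by
  have hBR : IsUnit (B.map (Int.cast : ℤ → R)) :=
    ((isUnit_iff_isUnit_det B).mpr hB).map (Int.castRingHom R).mapMatrix
  have hsol : B.map (Int.cast : ℤ → R) *ᵥ (fun i => ((B⁻¹ *ᵥ b) i : R)) =
      fun i => (b i : R) := by
    ext i
    have hcast := RingHom.map_mulVec (Int.castRingHom R) B (B⁻¹ *ᵥ b) i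
    rw [mulVec_mulVec, mul_nonsing_inv B hB, one_mulVec] at hcast
    exact hcast.symm
  exact ⟨B⁻¹ *ᵥ b, mulVec_injective_of_isUnit hBR (hy.trans hsol.symm)⟩

end Matrix

theorem exists_pos_mul_abs_le {ι 𝕜 : Type*} [Finite ι] [Field 𝕜] [LinearOrder 𝕜]
    [IsStrictOrderedRing 𝕜] {x c : ι → 𝕜} (hx : ∀ i, 0 ≤ x i) (hc : support c ⊆ support x) :
    ∃ ε > 0, ∀ i, ε * |c i| ≤ x i := by
  have hpoint : ∀ i, ∃ ε : Ioi (0 : 𝕜), (ε : 𝕜) * |c i| ≤ x i := by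
    intro i
    by_cases hxi : x i = 0
    · refine ⟨⟨1, one_pos⟩, ?_⟩
      simp [hxi, show c i = 0 from notMem_support.mp fun h => hc h hxi]
    · have hxpos : 0 < x i := (hx i).lt_of_ne' hxi
      refine ⟨⟨x i / (|c i| + 1), div_pos hxpos (by positivity)⟩, ?_⟩
      rw [div_mul_eq_mul_div, div_le_iff₀ (by positivity)]
      nlinarith [abs_nonneg (c i)]
  choose ε hε using hpoint
  obtain ⟨δ, hδ⟩ := Finite.exists_ge ε
  exact ⟨δ, δ.2, fun i =>
    (mul_le_mul_of_nonneg_right (Subtype.coe_le_coe.mpr (hδ i)) (abs_nonneg _)).trans (hε i)⟩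

section ExtremePoint

variable {m n 𝕜 : Type*} [Fintype n] [Field 𝕜] [LinearOrder 𝕜] [IsStrictOrderedRing 𝕜]
  {M : Matrix m n 𝕜} {b : m → 𝕜} {x : n → 𝕜}

theorem eq_zero_of_mulVec_eq_zero_of_mem_extremePoints
    (hx : x ∈ extremePoints 𝕜 {α | (∀ i, 0 ≤ α i) ∧ M *ᵥ α = b}) {c : n → 𝕜}
    (hc : M *ᵥ c = 0) (hcx : support c ⊆ support x) : c = 0 := by
  obtain ⟨⟨hx0, hxb⟩, hext⟩ := hx
  obtain ⟨ε, hε, hεc⟩ := exists_pos_mul_abs_le hx0 hcx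
  have hbound : ∀ i, |(ε • c) i| ≤ x i := fun i => by
    simpa [abs_mul, abs_of_pos hε] using hεc i
  have hsub : x - ε • c ∈ {α | (∀ i, 0 ≤ α i) ∧ M *ᵥ α = b} :=
    ⟨fun i => sub_nonneg.mpr (abs_le.mp (hbound i)).2, by
      rw [mulVec_sub, mulVec_smul, hc, smul_zero, sub_zero, hxb]⟩
  have hadd : x + ε • c ∈ {α | (∀ i, 0 ≤ α i) ∧ M *ᵥ α = b} :=
    ⟨fun i => neg_le_iff_add_nonneg'.mp (abs_le.mp (hbound i)).1, by
      rw [mulVec_add, mulVec_smul, hc, smul_zero, add_zero, hxb]⟩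
  have hsub_eq : x - ε • c = x := hext hsub hadd (mem_openSegment_sub_add x (ε • c))
  simpa [hε.ne'] using hsub_eq

theorem linearIndepOn_col_support_of_mem_extremePoints
    (hx : x ∈ extremePoints 𝕜 {α | (∀ i, 0 ≤ α i) ∧ M *ᵥ α = b}) :
    LinearIndepOn 𝕜 M.col (support x) :=
  (M.linearIndepOn_col_iff _).mpr fun _ hcx hc =>
    eq_zero_of_mulVec_eq_zero_of_mem_extremePoints hx hc hcx

end ExtremePoint

/-- If `A` is a unimodular integer matrix (all `r × r` minors in `{0, 1, -1}`) of rank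
`r`, then for every integral `b`, every vertex (extreme point) of the polyhedron
`P(A,b) = {α ≥ 0 : Aα = b}` has integer coordinates. -/
theorem stmt6 (r n : ℕ) (A : Matrix (Fin r) (Fin n) ℤ)
    (hminor : ∀ f : Fin r → Fin n,
      (A.submatrix id f).det = 0 ∨ (A.submatrix id f).det = 1 ∨ (A.submatrix id f).det = -1)
    (hrank : (A.map (Int.cast : ℤ → ℚ)).rank = r)
    (b : Fin r → ℤ) :
    ∀ x ∈ Set.extremePoints ℝ
        {α : Fin n → ℝ | (∀ i, 0 ≤ α i) ∧
          (A.map (Int.cast : ℤ → ℝ)).mulVec α = fun i => (b i : ℝ)},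
      ∀ i, ∃ z : ℤ, x i = (z : ℝ) := by
  intro x hx i
  have hrows : LinearIndependent ℤ A.row :=
    (rank_map_algebraMap_eq_card_iff ℚ A).mp (by simpa using hrank)
  have hrankR : (A.map (Int.cast : ℤ → ℝ)).rank = Fintype.card (Fin r) := by
    simpa using (rank_map_algebraMap_eq_card_iff ℝ A).mpr hrows
  obtain ⟨f, hf, hxf, hunit⟩ := exists_isUnit_submatrix_of_linearIndepOn hrankR
    (linearIndepOn_col_support_of_mem_extremePoints hx)
  have hdet : IsUnit (A.submatrix id f).det := by
    refine Int.isUnit_iff.mpr ((hminor f).resolve_left fun h0 => ?_)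
    have hcast := RingHom.map_det (Int.castRingHom ℝ) (A.submatrix id f)
    rw [h0, map_zero] at hcast
    exact ((isUnit_iff_isUnit_det _).mp hunit).ne_zero hcast.symm
  obtain ⟨z, hz⟩ := exists_eq_intCast_of_mulVec_eq hdet
    ((submatrix_mulVec_comp_of_support_subset _ hf hxf).trans hx.1.2)
  by_cases hxi : x i = 0
  · exact ⟨0, by simp [hxi]⟩
  · obtain ⟨j, rfl⟩ := hxf hxi
    exact ⟨z j, congrFun hz j⟩
end

section
/- Let E(λ) = L(λ)/∏_{i=1}^n (1 − u_i λ^{a_i}) be a rational function of λ over a field of iterated Laurent series, with each monomial u_i λ^{a_i} either 'small' or 'large' in the field ordering, and suppose deg_λ E < 0 (E is proper in λ). With the partial fraction decomposition E = Σ_i A_i(λ)/(1 − u_i λ^{a_i}) (deg A_i < a_i), the constant term of the series expansion of E in λ (expanding each 1/(1 − u_i λ^{a_i}) as Σ_k (u_i λ^{a_i})^k when small and as Σ_k −(u_i λ^{a_i})^{−k−1} when large) equals Σ_{i : u_i λ^{a_i} small} A_i(0). -/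
/-- The inner variable `λ`, viewed inside the iterated Laurent series field
`G = ℂ((λ))((y))`. -/
noncomputable def lamG : LaurentSeries (LaurentSeries ℂ) :=
  HahnSeries.C (HahnSeries.single (1 : ℤ) (1 : ℂ))

/-- An element of `G = ℂ((λ))((y))` is free of `λ` if each of its `y`-coefficients is a
constant (a `λ`-monomial of exponent `0`). -/
def FreeOfLambda (g : LaurentSeries (LaurentSeries ℂ)) : Prop :=
  ∀ e : ℤ, ∃ cst : ℂ, g.coeff e = HahnSeries.single (0 : ℤ) cst

/-!
Write `P = Σ_{t<a} A_t λ^t`, so that `X = P / (1 - M)` satisfies `X = Σ_{k<K} P M^k + X M^K`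
for every `K`. For `M = c y^e λ^a` small, `X M^K` has no `y^j λ^0` term once `K` is large, and
among the `P M^k` only `k = 0` has a `λ^0` term, because the `λ`-degrees of `P` lie in `[0, a)`.
For `M` large the same argument runs with the small monomial `M⁻¹` and `X (1 - M⁻¹) = -P M⁻¹`:
every `P M^{-k-1}` has its `λ`-degrees in `[-(k+1)a, -ka)`, so nothing survives.
-/

open HahnSeries Finset Filter

local notation "𝔾" => LaurentSeries (LaurentSeries ℂ)

lemma eq_mul_geom_sum_add_mul_pow {R : Type*} [CommRing R] {x q r : R}
    (h : x * (1 - r) = q) (K : ℕ) : x = ∑ k ∈ range K, q * r ^ k + x * r ^ K := by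
  rw [← mul_sum, ← h, mul_assoc, mul_neg_geom_sum]
  ring

lemma eventually_coeff_coeff_mul_single_pow_eq_zero {R : Type*} [Semiring R]
    (x : LaurentSeries (LaurentSeries R)) {f b : ℤ} (hfb : 0 < f ∨ f = 0 ∧ 0 < b) (d : R)
    (y j : ℤ) : ∀ᶠ K : ℕ in atTop, ((x * single f (single b d) ^ K).coeff y).coeff j = 0 := by
  simp only [single_pow, coeff_mul_single, nsmul_eq_mul]
  rcases hfb with hf | ⟨rfl, hb⟩
  · refine eventually_atTop.2 ⟨(y - x.order).toNat + 1, fun K hK => ?_⟩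
    have hK : y - K * f < x.order := by
      have : (K : ℤ) ≤ K * f := le_mul_of_one_le_right K.cast_nonneg hf
      omega
    rw [coeff_eq_zero_of_lt_order hK, coeff_zero, zero_mul]
  · refine eventually_atTop.2 ⟨(j - (x.coeff y).order).toNat + 1, fun K hK => ?_⟩
    have hK : j - K * b < (x.coeff y).order := by
      have : (K : ℤ) ≤ K * b := le_mul_of_one_le_right K.cast_nonneg hb
      omega
    rw [mul_zero, sub_zero, coeff_eq_zero_of_lt_order hK, zero_mul]

lemma lamG_pow (t : ℕ) : lamG ^ t = single (0 : ℤ) (single (t : ℤ) (1 : ℂ)) := by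
  simp [lamG, single_pow]

lemma one_sub_single_single_ne_zero {R : Type*} [Ring R] [Nontrivial R] {a : ℤ} (ha : a ≠ 0)
    (e : ℤ) (c : R) : (1 : LaurentSeries (LaurentSeries R)) - single e (single a c) ≠ 0 := by
  intro h
  have := congrArg (fun x => (x.coeff 0).coeff 0) h
  simp only [coeff_sub, coeff_one, coeff_single, if_true] at this
  split_ifs at this <;> simp [ha.symm] at this

lemma coeff_sum_mul_lamG_pow {A : ℕ → 𝔾} (hA : ∀ t, FreeOfLambda (A t)) (a : ℕ) (y : ℤ) :
    (∑ t ∈ range a, A t * lamG ^ t).coeff y =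
      ∑ t ∈ range a, single (t : ℤ) (((A t).coeff y).coeff 0) := by
  rw [coeff_sum]
  refine sum_congr rfl fun t _ => ?_
  obtain ⟨cst, hcst⟩ := hA t y
  rw [lamG_pow, coeff_mul_single_zero, hcst, single_mul_single, zero_add, coeff_single_same,
    mul_one]

lemma coeff_coeff_zero_sum_mul_lamG_pow_mul_single {A : ℕ → 𝔾} (hA : ∀ t, FreeOfLambda (A t))
    {a : ℕ} (ha : 0 < a) (g m : ℤ) (d : ℂ) (y : ℤ) :
    (((∑ t ∈ range a, A t * lamG ^ t) * single g (single (m * a) d)).coeff y).coeff 0 =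
      if m = 0 then ((A 0).coeff (y - g)).coeff 0 * d else 0 := by
  rw [coeff_mul_single, coeff_sum_mul_lamG_pow hA, sum_mul, coeff_sum]
  simp only [single_mul_single, coeff_single]
  split_ifs with hm
  · subst hm
    simp [@eq_comm ℤ 0, ha]
  · refine sum_eq_zero fun t ht => if_neg fun h => ?_
    have ht : (t : ℤ) < a := by exact_mod_cast mem_range.1 ht
    rcases Ne.lt_or_gt hm with hm | hm <;> nlinarith

section ConstantTerm

variable {A : ℕ → 𝔾} (hA : ∀ t, FreeOfLambda (A t)) {a : ℕ} (ha : 0 < a)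
include hA ha

lemma coeff_coeff_zero_eq_of_mul_one_sub_eq_of_nonneg {e : ℤ} (he : 0 ≤ e) (c : ℂ) {X : 𝔾}
    (hX : X * (1 - single e (single (a : ℤ) c)) = ∑ t ∈ range a, A t * lamG ^ t) (y : ℤ) :
    (X.coeff y).coeff 0 = ((A 0).coeff y).coeff 0 := by
  have hsmall : 0 < e ∨ e = 0 ∧ 0 < (a : ℤ) := he.lt_or_eq'.imp_right (⟨·, by omega⟩)
  obtain ⟨K, hXK, hK⟩ := ((eventually_coeff_coeff_mul_single_pow_eq_zero X hsmall c y 0).and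
    (eventually_ge_atTop 1)).exists
  rw [eq_mul_geom_sum_add_mul_pow (x := X) hX K, coeff_add, coeff_add, hXK, add_zero, coeff_sum,
    coeff_sum]
  simp only [single_pow, nsmul_eq_mul, coeff_coeff_zero_sum_mul_lamG_pow_mul_single hA ha,
    Nat.cast_eq_zero]
  rw [sum_ite_eq', if_pos (mem_range.2 hK)]
  simp

lemma coeff_coeff_zero_eq_zero_of_mul_one_sub_eq_of_neg {e : ℤ} (he : e < 0) {c : ℂ} (hc : c ≠ 0)
    {X : 𝔾} (hX : X * (1 - single e (single (a : ℤ) c)) = ∑ t ∈ range a, A t * lamG ^ t)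
    (y : ℤ) : (X.coeff y).coeff 0 = 0 := by
  set N : 𝔾 := single (-e) (single (-(a : ℤ)) c⁻¹)
  have hMN : single e (single (a : ℤ) c) * N = 1 := by
    simp only [N, single_mul_single, add_neg_cancel, mul_inv_cancel₀ hc]
    rfl
  have hXN : X * (1 - N) = -((∑ t ∈ range a, A t * lamG ^ t) * N) := by
    rw [← hX]
    calc X * (1 - N) = -(X * (1 - single e (single (a : ℤ) c)) * N)
          + X * (1 - single e (single (a : ℤ) c) * N) := by ring
      _ = _ := by rw [hMN]; ring
  obtain ⟨K, hXK⟩ := (eventually_coeff_coeff_mul_single_pow_eq_zero X (Or.inl (neg_pos.2 he))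
    c⁻¹ y 0).exists
  rw [eq_mul_geom_sum_add_mul_pow (x := X) hXN K, coeff_add, coeff_add, hXK, add_zero, coeff_sum,
    coeff_sum]
  refine sum_eq_zero fun k _ => ?_
  rw [show -((∑ t ∈ range a, A t * lamG ^ t) * N) * N ^ k
      = -((∑ t ∈ range a, A t * lamG ^ t) * N ^ (k + 1)) by ring,
    coeff_neg, coeff_neg, neg_eq_zero, single_pow, single_pow, nsmul_eq_mul, nsmul_eq_mul,
    mul_neg _ (a : ℤ), ← neg_mul _ (a : ℤ), coeff_coeff_zero_sum_mul_lamG_pow_mul_single hA ha,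
    if_neg (by omega)]

lemma coeff_coeff_zero_sum_mul_lamG_pow_mul_inv_one_sub {c : ℂ} (hc : c ≠ 0) (e : ℤ) (y : ℤ) :
    (((∑ t ∈ range a, A t * lamG ^ t) * (1 - single e (single (a : ℤ) c))⁻¹).coeff y).coeff 0 =
      if 0 ≤ e then ((A 0).coeff y).coeff 0 else 0 := by
  have hX := inv_mul_cancel_right₀ (G₀ := 𝔾)
    (one_sub_single_single_ne_zero (a := (a : ℤ)) (by omega) e c)
    (∑ t ∈ range a, A t * lamG ^ t)
  split_ifs with he
  · exact coeff_coeff_zero_eq_of_mul_one_sub_eq_of_nonneg hA ha he c hX y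
  · exact coeff_coeff_zero_eq_zero_of_mul_one_sub_eq_of_neg hA ha (not_le.1 he) hc hX y

end ConstantTerm

/-- `M i = c_i y^{e_i} λ^{a_i}` is small iff `0 ≤ e i`. -/
theorem stmt11 (n : ℕ) (c : Fin n → ℂ) (hc : ∀ i, c i ≠ 0)
    (e : Fin n → ℤ) (a : Fin n → ℕ) (ha : ∀ i, 0 < a i)
    (A : Fin n → ℕ → LaurentSeries (LaurentSeries ℂ))
    (hAfree : ∀ i t, FreeOfLambda (A i t))
    (M : Fin n → LaurentSeries (LaurentSeries ℂ))
    (hM : ∀ i, M i = HahnSeries.single (e i) (HahnSeries.single (0 : ℤ) (c i)) * lamG ^ a i)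
    (E : LaurentSeries (LaurentSeries ℂ))
    (hE : E = ∑ i, (∑ t ∈ Finset.range (a i), A i t * lamG ^ t) * (1 - M i)⁻¹) :
    ∀ yexp : ℤ,
      (E.coeff yexp).coeff 0 =
        (((Finset.univ.filter fun i => 0 ≤ e i).sum fun i => A i 0).coeff yexp).coeff 0 := by
  intro yexp
  have hM' : ∀ i, M i = single (e i) (single (a i : ℤ) (c i)) := fun i => by
    rw [hM i, lamG_pow, single_mul_single, single_mul_single, add_zero, zero_add, mul_one]
  simp only [hE, hM', coeff_sum,
    coeff_coeff_zero_sum_mul_lamG_pow_mul_inv_one_sub (hAfree _) (ha _) (hc _), sum_filter]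
  refine sum_congr rfl fun i _ => ?_
  split_ifs <;> rfl
end

section
/- Let A ∈ ℤ^{r×n} have rank r and suppose A x = 0 has a strictly positive solution. Then for any submatrix obtained from A by a sequence of k pivot column-eliminations at positions (i_1,j_1), …, (i_k,j_k) (each pivot entry nonzero), with the pivot rows and columns deleted, every row of the resulting (r−k) × (n−k) matrix contains at least one positive entry and at least one negative entry. -/
/-!
After a pivot step at `(i, j)`, every remaining row is the row combination
`M x - (M x j / M i j) • M i` with its (vanishing) `j`-th entry deleted. Hence a strictly positive
solution of `M *ᵥ α = 0` restricts to one of the smaller system, and the remaining rows stay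
linearly independent. A nonzero row `v` with `v ⬝ᵥ γ = 0` for some `γ > 0` has entries of both
signs.
-/

/-- Pivot column-elimination at position `(i,j)` followed by deletion of row `i` and
column `j`. -/
noncomputable def pivotDel {r n : ℕ} (M : Matrix (Fin (r + 1)) (Fin (n + 1)) ℝ)
    (i : Fin (r + 1)) (j : Fin (n + 1)) : Matrix (Fin r) (Fin n) ℝ :=
  fun a s => M (i.succAbove a) (j.succAbove s) -
    M i (j.succAbove s) / M i j * M (i.succAbove a) j

/-- `Elim M B` means that `B` is obtained from `M` by a finite sequence of pivot
column-eliminations (each with a nonzero pivot entry), deleting the pivot row and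
column at each step. -/
inductive Elim : {r n r' n' : ℕ} → Matrix (Fin r) (Fin n) ℝ → Matrix (Fin r') (Fin n') ℝ → Prop
  | refl {r n : ℕ} (M : Matrix (Fin r) (Fin n) ℝ) : Elim M M
  | step {r n r' n' : ℕ} (M : Matrix (Fin (r + 1)) (Fin (n + 1)) ℝ)
      (i : Fin (r + 1)) (j : Fin (n + 1)) (B : Matrix (Fin r') (Fin n') ℝ) :
      M i j ≠ 0 → Elim (pivotDel M i j) B → Elim M B

open Matrix

lemma Matrix.linearIndependent_row_of_rank_eq_card {m n R : Type*} [Field R] [Fintype m]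
    [Fintype n] {M : Matrix m n R} (h : M.rank = Fintype.card m) : LinearIndependent R M.row := by
  rw [linearIndependent_iff_card_eq_finrank_span, Set.finrank, ← rank_eq_finrank_span_row, h]

section DotProductSign

variable {ι R : Type*} [Fintype ι] [Ring R] [LinearOrder R] [IsStrictOrderedRing R]
  {v γ : ι → R}

lemma exists_pos_of_dotProduct_eq_zero (hv : v ≠ 0) (hγ : ∀ s, 0 < γ s) (h : v ⬝ᵥ γ = 0) :
    ∃ s, 0 < v s := by
  by_contra! hle
  refine hv (funext fun s => ?_)
  have hterms := (Finset.sum_eq_zero_iff_of_nonpos fun s _ =>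
    mul_nonpos_of_nonpos_of_nonneg (hle s) (hγ s).le).mp h
  exact (mul_eq_zero.mp (hterms s (Finset.mem_univ s))).resolve_right (hγ s).ne'

lemma exists_neg_of_dotProduct_eq_zero (hv : v ≠ 0) (hγ : ∀ s, 0 < γ s) (h : v ⬝ᵥ γ = 0) :
    ∃ s, v s < 0 := by
  simpa using exists_pos_of_dotProduct_eq_zero (neg_ne_zero.mpr hv) hγ (by simp [h])

end DotProductSign

lemma Fin.dotProduct_comp_succAbove {R : Type*} [Semiring R] {n : ℕ} {v w : Fin (n + 1) → R}
    (j : Fin (n + 1)) (hv : v j = 0) : (v ∘ j.succAbove) ⬝ᵥ (w ∘ j.succAbove) = v ⬝ᵥ w := by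
  simp [dotProduct, Fin.sum_univ_succAbove _ j, hv]

section PivotDel

variable {r n : ℕ} (M : Matrix (Fin (r + 1)) (Fin (n + 1)) ℝ) (i : Fin (r + 1)) (j : Fin (n + 1))

noncomputable def pivotRow (a : Fin r) : Fin (n + 1) → ℝ :=
  M (i.succAbove a) - (M (i.succAbove a) j / M i j) • M i

lemma pivotDel_apply_eq (a : Fin r) : pivotDel M i j a = pivotRow M i j a ∘ j.succAbove := by
  ext s
  simp only [pivotDel, pivotRow, Function.comp_apply, Pi.sub_apply, Pi.smul_apply, smul_eq_mul]
  ring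

variable {M i j}

lemma pivotRow_apply_pivot (hij : M i j ≠ 0) (a : Fin r) : pivotRow M i j a j = 0 := by
  simp [pivotRow, hij]

lemma pivotDel_mulVec_comp_succAbove (hij : M i j ≠ 0) {α : Fin (n + 1) → ℝ} (hα : M *ᵥ α = 0) :
    pivotDel M i j *ᵥ (α ∘ j.succAbove) = 0 := by
  ext a
  have hrow : ∀ x, M x ⬝ᵥ α = 0 := fun x => congrFun hα x
  rw [mulVec, pivotDel_apply_eq, Fin.dotProduct_comp_succAbove j (pivotRow_apply_pivot hij a),
    pivotRow, sub_dotProduct, smul_dotProduct, hrow, hrow]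
  simp

lemma linearIndependent_pivotDel (hij : M i j ≠ 0) (hM : LinearIndependent ℝ M.row) :
    LinearIndependent ℝ (pivotDel M i j).row := by
  simp only [Fintype.linearIndependent_iff, row_def] at hM ⊢
  intro g hg a
  set c : ℝ := ∑ a, g a * (M (i.succAbove a) j / M i j)
  have hcomb : ∑ a, g a • pivotRow M i j a = 0 := by
    refine funext ((Fin.forall_iff_succAbove j).mpr ⟨?_, fun s => ?_⟩)
    · simp [pivotRow_apply_pivot hij]
    · simpa [Finset.sum_apply, pivotDel_apply_eq] using congrFun hg s
  have hG := hM (i.insertNth (-c) g) (by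
    rw [Fin.sum_univ_succAbove _ i, ← hcomb]
    simp only [Fin.insertNth_apply_same, Fin.insertNth_apply_succAbove, pivotRow, smul_sub,
      Finset.sum_sub_distrib, smul_smul, ← Finset.sum_smul, c, neg_smul]
    abel) (i.succAbove a)
  simpa using hG

end PivotDel

lemma Elim.linearIndependent {r n r' n' : ℕ} {M : Matrix (Fin r) (Fin n) ℝ}
    {C : Matrix (Fin r') (Fin n') ℝ} (h : Elim M C) (hM : LinearIndependent ℝ M.row) :
    LinearIndependent ℝ C.row := by
  induction h with
  | refl => exact hM
  | step M i j C hij _ ih => exact ih (linearIndependent_pivotDel hij hM)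

lemma Elim.exists_pos_mulVec_eq_zero {r n r' n' : ℕ} {M : Matrix (Fin r) (Fin n) ℝ}
    {C : Matrix (Fin r') (Fin n') ℝ} (h : Elim M C) {α : Fin n → ℝ} (hpos : ∀ s, 0 < α s)
    (hα : M *ᵥ α = 0) : ∃ γ : Fin n' → ℝ, (∀ s, 0 < γ s) ∧ C *ᵥ γ = 0 := by
  induction h with
  | refl => exact ⟨α, hpos, hα⟩
  | step M i j C hij _ ih =>
    exact ih (fun s => hpos (j.succAbove s)) (pivotDel_mulVec_comp_succAbove hij hα)

/-- If `A ∈ ℤ^{r×n}` has rank `r` and `Ax = 0` has a strictly positive solution, then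
every matrix obtained from `A` by a sequence of pivot column-eliminations (pivot rows
and columns deleted) has, in each row, at least one positive and at least one negative
entry. -/
theorem stmt15 (r n r' n' : ℕ) (A : Matrix (Fin r) (Fin n) ℤ)
    (hrank : (A.map (Int.cast : ℤ → ℝ)).rank = r)
    (α : Fin n → ℝ) (hpos : ∀ j, 0 < α j)
    (hsol : (A.map (Int.cast : ℤ → ℝ)).mulVec α = 0)
    (B : Matrix (Fin r') (Fin n') ℝ)
    (hB : Elim (A.map (Int.cast : ℤ → ℝ)) B) :
    ∀ i : Fin r', (∃ j, 0 < B i j) ∧ (∃ j, B i j < 0) := by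
  have hA : LinearIndependent ℝ (A.map (Int.cast : ℤ → ℝ)).row :=
    linearIndependent_row_of_rank_eq_card (by rw [hrank, Fintype.card_fin])
  have hBli := hB.linearIndependent hA
  obtain ⟨γ, hγ, hBγ⟩ := hB.exists_pos_mulVec_eq_zero hpos hsol
  intro a
  have hrow : B a ≠ 0 := hBli.ne_zero a
  exact ⟨exists_pos_of_dotProduct_eq_zero hrow hγ (congrFun hBγ a),
    exists_neg_of_dotProduct_eq_zero hrow hγ (congrFun hBγ a)⟩
end
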